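/- For the behavior policy μ̂ defined by μ̂_t(a|s) ∝ π_t(a|s)√(q̂_{π,t}(s,a)), the variance reduction is quantified: Var(G^PDIS(τ^{μ̂_{t:T−1}}_{t:T−1}) | S_t=s) ≤ Var(G_t | S_t=s) − ε_t(s), where c_t(s) = ∑_a π_t(a|s)q̂_{π,t}(s,a) − (∑_a π_t(a|s)√(q̂_{π,t}(s,a)))², ε_{T−1}(s) = c_{T−1}(s), and ε_t(s) = c_t(s) + min_a ∑_{s'} p(s'|s,a)ε_{t+1}(s') for t ≤ T−2. Moreover ε_t(s) ≥ 0 for all t, s. -/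

import Mathlib

open Finset

def Traj (S A : Type) : ℕ → Type
  | 0 => PUnit
  | n+1 => A × S × Traj S A n

instance trajFintype (S A : Type) [Fintype S] [Fintype A] : (n : ℕ) → Fintype (Traj S A n)
  | 0 => inferInstanceAs (Fintype PUnit)
  | n+1 => letI := trajFintype S A n; inferInstanceAs (Fintype (A × S × Traj S A n))

/-- Probability of a trajectory segment of `n` steps starting at time `t` in state `s`,
under behavior policy `b` and transition kernel `p`. -/
noncomputable def trajP {S A : Type} (b : ℕ → S → A → ℝ) (p : S → A → S → ℝ) :
    (n : ℕ) → ℕ → S → Traj S A n → ℝ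
  | 0, _, _, _ => 1
  | n+1, t, s, (a, s', τ) => b t s a * p s a s' * trajP b p n (t+1) s' τ

/-- Per-decision importance sampling return of a trajectory segment, with target policy `π`,
behavior policy `b`, and (deterministic) reward function `r`. -/
noncomputable def pdis {S A : Type} (π b : ℕ → S → A → ℝ) (r : S → A → ℝ) :
    (n : ℕ) → ℕ → S → Traj S A n → ℝ
  | 0, _, _, _ => 0
  | n+1, t, s, (a, s', τ) => (π t s a / b t s a) * (r s a + pdis π b r n (t+1) s' τ)

/-- On-policy (undiscounted) return of a trajectory segment. -/
noncomputable def retG {S A : Type} (r : S → A → ℝ) : (n : ℕ) → S → Traj S A n → ℝ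
  | 0, _, _ => 0
  | n+1, s, (a, s', τ) => r s a + retG r n s' τ

/-- Expectation of a trajectory functional, conditioned on `S_t = s`. -/
noncomputable def Ex {S A : Type} [Fintype S] [Fintype A] (b : ℕ → S → A → ℝ)
    (p : S → A → S → ℝ) (n t : ℕ) (s : S) (f : Traj S A n → ℝ) : ℝ :=
  ∑ τ : Traj S A n, trajP b p n t s τ * f τ

/-- Variance of a trajectory functional, conditioned on `S_t = s`. -/
noncomputable def VarTraj {S A : Type} [Fintype S] [Fintype A] (b : ℕ → S → A → ℝ)
    (p : S → A → S → ℝ) (n t : ℕ) (s : S) (f : Traj S A n → ℝ) : ℝ :=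
  Ex b p n t s (fun τ => (f τ)^2) - (Ex b p n t s f)^2

/-- `ν_{π,t}(s,a)`: variance of the next-state value. -/
noncomputable def nuF {S A : Type} [Fintype S] (p : S → A → S → ℝ) (v : ℕ → S → ℝ)
    (t : ℕ) (s : S) (a : A) : ℝ :=
  (∑ s', p s a s' * (v (t+1) s')^2) - (∑ s', p s a s' * v (t+1) s')^2

section Machinery
variable {S A : Type} [Fintype S] [Fintype A]

lemma Ex_succ (b : ℕ → S → A → ℝ) (p : S → A → S → ℝ) (n t : ℕ) (s : S)
    (f : Traj S A (n+1) → ℝ) :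
    Ex b p (n+1) t s f
      = ∑ a, ∑ s', b t s a * p s a s' * Ex b p n (t+1) s' (fun τ => f (a, s', τ)) := by
  show ∑ τ : A × S × Traj S A n, trajP b p (n+1) t s τ * f τ = _
  rw [Fintype.sum_prod_type]
  refine Finset.sum_congr rfl fun a _ => ?_
  rw [Fintype.sum_prod_type]
  refine Finset.sum_congr rfl fun s' _ => ?_
  rw [Ex, Finset.mul_sum]
  refine Finset.sum_congr rfl fun τ _ => ?_
  show b t s a * p s a s' * trajP b p n (t+1) s' τ * f (a, s', τ) = _
  ring

lemma Ex_zeroLen (b : ℕ → S → A → ℝ) (p : S → A → S → ℝ) (t : ℕ) (s : S)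
    (f : Traj S A 0 → ℝ) : Ex b p 0 t s f = f PUnit.unit := by
  show ∑ τ : PUnit, trajP b p 0 t s τ * f τ = _
  simp [trajP]
  exact Finset.sum_singleton _ _

lemma trajP_sum_one (b : ℕ → S → A → ℝ) (p : S → A → S → ℝ)
    (hb1 : ∀ t s, ∑ a, b t s a = 1) (hp1 : ∀ s a, ∑ s', p s a s' = 1) :
    ∀ n t s, ∑ τ : Traj S A n, trajP b p n t s τ = 1
  | 0, t, s => by
      show ∑ τ : PUnit, trajP b p 0 t s τ = 1
      simp [trajP]
  | n+1, t, s => by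
      have h1 : ∑ τ : Traj S A (n+1), trajP b p (n+1) t s τ
          = Ex b p (n+1) t s (fun _ => 1) := by
        rw [Ex]; exact Finset.sum_congr rfl fun τ _ => (mul_one _).symm
      rw [h1, Ex_succ]
      have hE : ∀ s', Ex b p n (t+1) s' (fun _ => (1:ℝ)) = 1 := by
        intro s'
        rw [Ex]
        calc ∑ τ : Traj S A n, trajP b p n (t+1) s' τ * 1
            = ∑ τ : Traj S A n, trajP b p n (t+1) s' τ :=
              Finset.sum_congr rfl fun τ _ => mul_one _
          _ = 1 := trajP_sum_one b p hb1 hp1 n (t+1) s'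
      calc ∑ a, ∑ s', b t s a * p s a s' * Ex b p n (t+1) s' (fun _ => (1:ℝ))
          = ∑ a, ∑ s', b t s a * p s a s' := by
            refine Finset.sum_congr rfl fun a _ => Finset.sum_congr rfl fun s' _ => ?_
            rw [hE s', mul_one]
        _ = ∑ a, b t s a := by
            refine Finset.sum_congr rfl fun a _ => ?_
            rw [← Finset.mul_sum, hp1, mul_one]
        _ = 1 := hb1 t s

lemma Ex_comp (b : ℕ → S → A → ℝ) (p : S → A → S → ℝ) (n t : ℕ) (s : S)
    (hsum : ∑ τ : Traj S A n, trajP b p n t s τ = 1) (ρ x : ℝ) (f : Traj S A n → ℝ) :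
    Ex b p n t s (fun τ => ρ * (x + f τ)) = ρ * (x + Ex b p n t s f) := by
  simp only [Ex]
  have h : ∀ τ : Traj S A n, trajP b p n t s τ * (ρ * (x + f τ))
      = ρ * x * trajP b p n t s τ + ρ * (trajP b p n t s τ * f τ) := fun τ => by ring
  rw [Finset.sum_congr rfl fun τ _ => h τ, Finset.sum_add_distrib,
    ← Finset.mul_sum, ← Finset.mul_sum, hsum, mul_one]
  ring

lemma Ex_comp_sq (b : ℕ → S → A → ℝ) (p : S → A → S → ℝ) (n t : ℕ) (s : S)
    (hsum : ∑ τ : Traj S A n, trajP b p n t s τ = 1) (ρ x : ℝ) (f : Traj S A n → ℝ) :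
    Ex b p n t s (fun τ => (ρ * (x + f τ))^2)
      = ρ^2 * (x^2 + 2*x*Ex b p n t s f + Ex b p n t s (fun τ => f τ ^ 2)) := by
  simp only [Ex]
  have h : ∀ τ : Traj S A n, trajP b p n t s τ * (ρ * (x + f τ))^2
      = ρ^2 * x^2 * trajP b p n t s τ + ρ^2 * (2*x) * (trajP b p n t s τ * f τ)
        + ρ^2 * (trajP b p n t s τ * f τ^2) := fun τ => by ring
  rw [Finset.sum_congr rfl fun τ _ => h τ, Finset.sum_add_distrib, Finset.sum_add_distrib,
    ← Finset.mul_sum, ← Finset.mul_sum, ← Finset.mul_sum, hsum, mul_one]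
  ring

lemma sum_p_affine (pp : S → ℝ) (hp1 : ∑ s', pp s' = 1) (x : ℝ) (g : S → ℝ) :
    ∑ s', pp s' * (x + g s') = x + ∑ s', pp s' * g s' := by
  have h : ∀ s', pp s' * (x + g s') = pp s' * x + pp s' * g s' := fun s' => by ring
  rw [Finset.sum_congr rfl fun s' _ => h s', Finset.sum_add_distrib, ← Finset.sum_mul, hp1,
    one_mul]

lemma sum_p_quad (pp : S → ℝ) (hp1 : ∑ s', pp s' = 1) (x : ℝ) (g h : S → ℝ) :
    ∑ s', pp s' * (x^2 + 2*x*g s' + h s')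
      = x^2 + 2*x*(∑ s', pp s' * g s') + ∑ s', pp s' * h s' := by
  have he : ∀ s', pp s' * (x^2 + 2*x*g s' + h s')
      = pp s' * x^2 + 2*x*(pp s' * g s') + pp s' * h s' := fun s' => by ring
  rw [Finset.sum_congr rfl fun s' _ => he s', Finset.sum_add_distrib, Finset.sum_add_distrib,
    ← Finset.sum_mul, hp1, one_mul, ← Finset.mul_sum]

end Machinery

open scoped Classical in
lemma key_pi_mu {A : Type} [Fintype A] [Nonempty A] (pi qh qa mu : A → ℝ)
    (hπ0 : ∀ a, 0 ≤ pi a) (hq2 : ∀ a, qa a ^ 2 ≤ qh a)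
    (hμ : ∀ a, mu a = if ∃ a₀, pi a₀ * Real.sqrt (qh a₀) ≠ 0
      then pi a * Real.sqrt (qh a) / ∑ b, pi b * Real.sqrt (qh b)
      else 1 / (Fintype.card A : ℝ)) :
    ∀ a, mu a * (pi a / mu a * qa a) = pi a * qa a := by
  intro a
  have hcard : ((Fintype.card A : ℝ)) ≠ 0 := by
    have : (0:ℕ) < Fintype.card A := Fintype.card_pos
    exact_mod_cast this.ne'
  by_cases hmu : mu a = 0
  · rw [hmu, zero_mul]
    rw [hμ a] at hmu
    split_ifs at hmu with hcase
    · rcases div_eq_zero_iff.1 hmu with h | h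
      · rcases mul_eq_zero.1 h with h' | h'
        · rw [h', zero_mul]
        · have hqa : qa a = 0 := by
            have h0 : qh a ≤ 0 := Real.sqrt_eq_zero'.1 h'
            have := hq2 a
            nlinarith [sq_nonneg (qa a)]
          rw [hqa, mul_zero]
      · obtain ⟨a₀, ha₀⟩ := hcase
        have hterm0 : ∀ b, 0 ≤ pi b * Real.sqrt (qh b) :=
          fun b => mul_nonneg (hπ0 b) (Real.sqrt_nonneg _)
        have hZpos : 0 < ∑ b, pi b * Real.sqrt (qh b) :=
          lt_of_lt_of_le (lt_of_le_of_ne (hterm0 a₀) (Ne.symm ha₀))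
            (Finset.single_le_sum (fun b _ => hterm0 b) (Finset.mem_univ a₀))
        exact absurd h hZpos.ne'
    · exact absurd hmu (one_div_ne_zero hcard)
  · field_simp



lemma jensen_sq {ι : Type*} [Fintype ι] (w x : ι → ℝ) (hw : ∀ i, 0 ≤ w i)
    (h1 : ∑ i, w i = 1) : (∑ i, w i * x i)^2 ≤ ∑ i, w i * x i ^ 2 := by
  have h := Finset.sum_mul_sq_le_sq_mul_sq Finset.univ (fun i => Real.sqrt (w i))
    (fun i => Real.sqrt (w i) * x i)
  calc (∑ i, w i * x i)^2
      = (∑ i, Real.sqrt (w i) * (Real.sqrt (w i) * x i))^2 := by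
        congr 1; refine Finset.sum_congr rfl fun i _ => ?_
        rw [← mul_assoc, Real.mul_self_sqrt (hw i)]
    _ ≤ (∑ i, Real.sqrt (w i)^2) * ∑ i, (Real.sqrt (w i) * x i)^2 := h
    _ = ∑ i, w i * x i ^2 := by
        rw [show (∑ i, Real.sqrt (w i)^2) = 1 from ?_, one_mul]
        · refine Finset.sum_congr rfl fun i _ => ?_
          rw [mul_pow, Real.sq_sqrt (hw i)]
        · rw [← h1]; exact Finset.sum_congr rfl fun i _ => Real.sq_sqrt (hw i)

open scoped Classical in
lemma core_bound {A : Type} [Fintype A] [Nonempty A] (pi qh e mu : A → ℝ)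
    (hπ0 : ∀ a, 0 ≤ pi a) (hπ1 : ∑ a, pi a = 1) (hq : ∀ a, 0 ≤ qh a)
    (he0 : ∀ a, 0 ≤ e a) (heq : ∀ a, e a ≤ qh a)
    (hμ : ∀ a, mu a = if ∃ a₀, pi a₀ * Real.sqrt (qh a₀) ≠ 0
      then pi a * Real.sqrt (qh a) / ∑ b, pi b * Real.sqrt (qh b)
      else 1 / (Fintype.card A : ℝ)) :
    ∑ a, mu a * (pi a / mu a)^2 * (qh a - e a)
      ≤ (∑ a, pi a * Real.sqrt (qh a))^2 - Finset.univ.inf' Finset.univ_nonempty e := by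
  set Z := ∑ a, pi a * Real.sqrt (qh a) with hZdef
  set m := Finset.univ.inf' Finset.univ_nonempty e with hmdef
  have hm_le : ∀ a, m ≤ e a := fun a => Finset.inf'_le _ (Finset.mem_univ a)
  have hm0 : 0 ≤ m := Finset.le_inf' _ _ (fun a _ => he0 a)
  have hterm0 : ∀ a, 0 ≤ pi a * Real.sqrt (qh a) :=
    fun a => mul_nonneg (hπ0 a) (Real.sqrt_nonneg _)
  have hcard : (0:ℝ) < (Fintype.card A : ℝ) := by
    exact_mod_cast Fintype.card_pos
  by_cases hcase : ∃ a₀, pi a₀ * Real.sqrt (qh a₀) ≠ 0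
  · obtain ⟨a₀, ha₀⟩ := hcase
    have hZpos : 0 < Z := by
      have h1 : 0 < pi a₀ * Real.sqrt (qh a₀) := lt_of_le_of_ne (hterm0 a₀) (Ne.symm ha₀)
      exact lt_of_lt_of_le h1 (Finset.single_le_sum (fun a _ => hterm0 a) (Finset.mem_univ a₀))
    have hZne : Z ≠ 0 := ne_of_gt hZpos
    have hμ' : ∀ a, mu a = pi a * Real.sqrt (qh a) / Z := by
      intro a; rw [hμ a, if_pos ⟨a₀, ha₀⟩]
    have hμnn : ∀ a, 0 ≤ mu a := fun a => by
      rw [hμ' a]; exact div_nonneg (hterm0 a) (le_of_lt hZpos)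
    have hkq : ∀ a, mu a * (pi a / mu a)^2 * qh a = Z * (pi a * Real.sqrt (qh a)) := by
      intro a
      by_cases hw : pi a * Real.sqrt (qh a) = 0
      · have : mu a = 0 := by rw [hμ' a, hw, zero_div]
        rw [this, hw, zero_mul, zero_mul, mul_zero]
      · have hpi : pi a ≠ 0 := fun h => hw (by rw [h, zero_mul])
        have hsq : Real.sqrt (qh a) ≠ 0 := fun h => hw (by rw [h, mul_zero])
        have hqh : qh a = Real.sqrt (qh a) * Real.sqrt (qh a) :=
          (Real.mul_self_sqrt (hq a)).symm
        rw [hμ' a, hqh]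
        field_simp [hpi, hsq, hZne]
        ring
        rw [Real.sqrt_sq (Real.sqrt_nonneg _)]
    have hsumkq : ∑ a, mu a * (pi a / mu a)^2 * qh a = Z^2 := by
      rw [Finset.sum_congr rfl (fun a _ => hkq a), ← Finset.mul_sum, ← hZdef, sq]
    have hke : m ≤ ∑ a, mu a * (pi a / mu a)^2 * e a := by
      rcases eq_or_lt_of_le hm0 with hme | hmpos
      · rw [← hme]
        exact Finset.sum_nonneg fun a _ =>
          mul_nonneg (mul_nonneg (hμnn a) (sq_nonneg _)) (he0 a)
      · have hqpos : ∀ a, 0 < qh a := fun a =>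
          lt_of_lt_of_le hmpos (le_trans (hm_le a) (heq a))
        have hsqpos : ∀ a, 0 < Real.sqrt (qh a) := fun a => Real.sqrt_pos.2 (hqpos a)
        have hCS : 1 ≤ Z * ∑ a, pi a / Real.sqrt (qh a) := by
          have h := Finset.sum_mul_sq_le_sq_mul_sq Finset.univ
            (fun a => Real.sqrt (pi a * Real.sqrt (qh a)))
            (fun a => Real.sqrt (pi a / Real.sqrt (qh a)))
          have hfg : ∀ a, Real.sqrt (pi a * Real.sqrt (qh a)) *
              Real.sqrt (pi a / Real.sqrt (qh a)) = pi a := by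
            intro a
            rw [← Real.sqrt_mul (hterm0 a)]
            have : pi a * Real.sqrt (qh a) * (pi a / Real.sqrt (qh a)) = pi a * pi a := by
              field_simp [(hsqpos a).ne']
            rw [this, Real.sqrt_mul_self (hπ0 a)]
          have hf2 : ∀ a, Real.sqrt (pi a * Real.sqrt (qh a))^2 = pi a * Real.sqrt (qh a) :=
            fun a => Real.sq_sqrt (hterm0 a)
          have hg2 : ∀ a, Real.sqrt (pi a / Real.sqrt (qh a))^2 = pi a / Real.sqrt (qh a) :=
            fun a => Real.sq_sqrt (div_nonneg (hπ0 a) (Real.sqrt_nonneg _))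
          calc (1:ℝ) = (∑ a, pi a)^2 := by rw [hπ1]; norm_num
            _ = (∑ a, Real.sqrt (pi a * Real.sqrt (qh a)) *
                  Real.sqrt (pi a / Real.sqrt (qh a)))^2 := by
                rw [Finset.sum_congr rfl (fun a _ => (hfg a).symm)]
            _ ≤ (∑ a, Real.sqrt (pi a * Real.sqrt (qh a))^2) *
                  ∑ a, Real.sqrt (pi a / Real.sqrt (qh a))^2 := h
            _ = Z * ∑ a, pi a / Real.sqrt (qh a) := by
                rw [Finset.sum_congr rfl (fun a _ => hf2 a),
                  Finset.sum_congr rfl (fun a _ => hg2 a)]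
        have hterm : ∀ a, m * (Z * (pi a / Real.sqrt (qh a)))
            ≤ mu a * (pi a / mu a)^2 * e a := by
          intro a
          by_cases hpi : pi a = 0
          · simp [hpi]
          · have hk : mu a * (pi a / mu a)^2 = Z * (pi a / Real.sqrt (qh a)) := by
              rw [hμ' a]
              field_simp [hpi, (hsqpos a).ne', hZne]
            rw [hk]
            have hco : 0 ≤ Z * (pi a / Real.sqrt (qh a)) :=
              mul_nonneg hZpos.le (div_nonneg (hπ0 a) (Real.sqrt_nonneg _))
            calc m * (Z * (pi a / Real.sqrt (qh a)))
                = Z * (pi a / Real.sqrt (qh a)) * m := by ring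
              _ ≤ Z * (pi a / Real.sqrt (qh a)) * e a :=
                  mul_le_mul_of_nonneg_left (hm_le a) hco
        calc m = m * 1 := (mul_one m).symm
          _ ≤ m * (Z * ∑ a, pi a / Real.sqrt (qh a)) :=
              mul_le_mul_of_nonneg_left hCS hm0
          _ = ∑ a, m * (Z * (pi a / Real.sqrt (qh a))) := by
              rw [Finset.mul_sum, Finset.mul_sum]
          _ ≤ ∑ a, mu a * (pi a / mu a)^2 * e a := Finset.sum_le_sum fun a _ => hterm a
    have hsplit : ∑ a, mu a * (pi a / mu a)^2 * (qh a - e a)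
        = (∑ a, mu a * (pi a / mu a)^2 * qh a) - ∑ a, mu a * (pi a / mu a)^2 * e a := by
      rw [← Finset.sum_sub_distrib]
      exact Finset.sum_congr rfl fun a _ => by ring
    rw [hsplit, hsumkq]
    linarith [hke]
  · push_neg at hcase
    have hμ' : ∀ a, mu a = 1 / (Fintype.card A : ℝ) := by
      intro a; rw [hμ a, if_neg (by push_neg; exact hcase)]
    have hZ0 : Z = 0 := Finset.sum_eq_zero fun a _ => hcase a
    have hqh0 : ∀ a, pi a ≠ 0 → qh a = 0 := by
      intro a hpi
      rcases mul_eq_zero.1 (hcase a) with h | h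
      · exact absurd h hpi
      · have := Real.sqrt_eq_zero'.1 h
        exact le_antisymm this (hq a)
    have hm_le0 : m ≤ 0 := by
      have hex : ∃ a, pi a ≠ 0 := by
        by_contra hno
        push_neg at hno
        rw [Finset.sum_eq_zero (fun a _ => hno a)] at hπ1
        norm_num at hπ1
      obtain ⟨a, ha⟩ := hex
      have : e a = 0 := le_antisymm (by rw [← hqh0 a ha]; exact heq a) (he0 a)
      rw [← this]; exact hm_le a
    have hsum0 : ∑ a, mu a * (pi a / mu a)^2 * (qh a - e a) ≤ 0 := by
      refine Finset.sum_nonpos fun a _ => ?_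
      have hμa : mu a = 1 / (Fintype.card A : ℝ) := hμ' a
      have hμpos : 0 < mu a := by rw [hμa]; positivity
      by_cases hpi : pi a = 0
      · simp [hpi]
      · have hq0 : qh a = 0 := hqh0 a hpi
        have he' : e a = 0 := le_antisymm (hq0 ▸ heq a) (he0 a)
        rw [hq0, he']
        simp
    rw [hZ0]
    have : (0:ℝ)^2 - m = -m := by ring
    rw [this]
    linarith [hsum0, hm_le0]

open Finset

section Machinery
variable {S A : Type} [Fintype S] [Fintype A]

lemma trajP_nonneg (b : ℕ → S → A → ℝ) (p : S → A → S → ℝ)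
    (hb : ∀ t s a, 0 ≤ b t s a) (hp : ∀ s a s', 0 ≤ p s a s') :
    ∀ n t s (τ : Traj S A n), 0 ≤ trajP b p n t s τ := by
  intro n
  induction n with
  | zero => intro t s τ; show (0:ℝ) ≤ 1; norm_num
  | succ n ih =>
      intro t s τ
      revert τ
      show ∀ τ : A × S × Traj S A n, 0 ≤ trajP b p (n+1) t s τ
      rintro ⟨a, s', τ⟩
      show 0 ≤ b t s a * p s a s' * trajP b p n (t+1) s' τ
      exact mul_nonneg (mul_nonneg (hb _ _ _) (hp _ _ _)) (ih (t+1) s' τ)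

end Machinery

open scoped Classical in
lemma step_all {S A : Type} [Fintype S] [Fintype A] [Nonempty A]
    (p : S → A → S → ℝ) (r : S → A → ℝ) (π μ : ℕ → S → A → ℝ)
    (hp0 : ∀ s a s', 0 ≤ p s a s') (hp1 : ∀ s a, ∑ s', p s a s' = 1)
    (hπ0 : ∀ t s a, 0 ≤ π t s a) (hπ1 : ∀ t s, ∑ a, π t s a = 1)
    (hμ0 : ∀ t s a, 0 ≤ μ t s a) (hμ1 : ∀ t s, ∑ a, μ t s a = 1)
    (n t : ℕ)
    (q qh : S → A → ℝ) (vt ct εt : S → ℝ) (v1 W1 ε1 : S → ℝ)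
    (hq : ∀ s a, q s a = r s a + ∑ s', p s a s' * v1 s')
    (hv : ∀ s, vt s = ∑ a, π t s a * q s a)
    (hqh : ∀ s a, qh s a = (2 * r s a * q s a - r s a ^ 2) + ∑ s', p s a s' * W1 s')
    (hμdef : ∀ s a, μ t s a = if ∃ a₀, π t s a₀ * Real.sqrt (qh s a₀) ≠ 0
      then π t s a * Real.sqrt (qh s a) / ∑ b, π t s b * Real.sqrt (qh s b)
      else 1 / (Fintype.card A : ℝ))
    (hct : ∀ s, ct s = ∑ a, π t s a * qh s a - (∑ a, π t s a * Real.sqrt (qh s a)) ^ 2)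
    (hεt : ∀ s, εt s = ct s + Finset.univ.inf' Finset.univ_nonempty
      (fun a => ∑ s', p s a s' * ε1 s'))
    (ih1 : ∀ s', Ex π p n (t+1) s' (retG r n s') = v1 s')
    (ih2 : ∀ s', Ex π p n (t+1) s' (fun τ => retG r n s' τ ^ 2) = W1 s')
    (ih3 : ∀ s', Ex μ p n (t+1) s' (pdis π μ r n (t+1) s') = v1 s')
    (ih4 : ∀ s', Ex μ p n (t+1) s' (fun τ => pdis π μ r n (t+1) s' τ ^ 2) ≤ W1 s' - ε1 s')
    (ih5 : ∀ s', 0 ≤ ε1 s')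
    (ih6 : ∀ s', (v1 s') ^ 2 ≤ W1 s' - ε1 s') :
    ∀ s,
      Ex π p (n+1) t s (retG r (n+1) s) = vt s ∧
      Ex π p (n+1) t s (fun τ => retG r (n+1) s τ ^ 2) = ∑ a, π t s a * qh s a ∧
      Ex μ p (n+1) t s (pdis π μ r (n+1) t s) = vt s ∧
      Ex μ p (n+1) t s (fun τ => pdis π μ r (n+1) t s τ ^ 2)
        ≤ (∑ a, π t s a * qh s a) - εt s ∧
      0 ≤ εt s ∧ (vt s) ^ 2 ≤ (∑ a, π t s a * qh s a) - εt s := by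
  intro s
  have hsumπ : ∀ n' t' s', ∑ τ : Traj S A n', trajP π p n' t' s' τ = 1 :=
    trajP_sum_one π p hπ1 hp1
  have hsumμ : ∀ n' t' s', ∑ τ : Traj S A n', trajP μ p n' t' s' τ = 1 :=
    trajP_sum_one μ p hμ1 hp1
  have hW1 : ∀ s', (v1 s')^2 ≤ W1 s' := fun s' => le_trans (ih6 s') (by linarith [ih5 s'])
  have hjen : ∀ a, (∑ s', p s a s' * v1 s')^2 ≤ ∑ s', p s a s' * (v1 s')^2 := fun a =>
    jensen_sq (fun s' => p s a s') v1 (fun s' => hp0 s a s') (hp1 s a)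
  have hWg : ∀ a, ∑ s', p s a s' * (v1 s')^2 ≤ ∑ s', p s a s' * W1 s' := fun a =>
    Finset.sum_le_sum fun s' _ => mul_le_mul_of_nonneg_left (hW1 s') (hp0 s a s')
  have hq2 : ∀ a, q s a ^ 2 ≤ qh s a := by
    intro a
    rw [hqh s a, hq s a]
    nlinarith [hjen a, hWg a]
  have hqh0 : ∀ a, 0 ≤ qh s a := fun a => le_trans (sq_nonneg _) (hq2 a)
  set e : A → ℝ := fun a => ∑ s', p s a s' * ε1 s' with hedef
  have he0 : ∀ a, 0 ≤ e a := fun a =>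
    Finset.sum_nonneg fun s' _ => mul_nonneg (hp0 s a s') (ih5 s')
  have heq : ∀ a, e a ≤ qh s a := by
    intro a
    have h1 : e a ≤ ∑ s', p s a s' * W1 s' - ∑ s', p s a s' * (v1 s')^2 := by
      have h2 : e a ≤ ∑ s', p s a s' * (W1 s' - (v1 s')^2) :=
        Finset.sum_le_sum fun s' _ =>
          mul_le_mul_of_nonneg_left (by linarith [ih6 s', ih5 s']) (hp0 s a s')
      have h3 : ∑ s', p s a s' * (W1 s' - (v1 s')^2)
          = ∑ s', p s a s' * W1 s' - ∑ s', p s a s' * (v1 s')^2 := by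
        rw [← Finset.sum_sub_distrib]
        exact Finset.sum_congr rfl fun s' _ => by ring
      linarith [h2, h3.le, h3.ge]
    rw [hqh s a, hq s a]
    have h4 : (∑ s', p s a s' * v1 s')^2 ≤ ∑ s', p s a s' * (v1 s')^2 := hjen a
    nlinarith [h1, h4, sq_nonneg (r s a + ∑ s', p s a s' * v1 s')]
  set m := Finset.univ.inf' Finset.univ_nonempty e with hmdef
  have hm0 : 0 ≤ m := Finset.le_inf' _ _ fun a _ => he0 a
  have hZc : (∑ a, π t s a * Real.sqrt (qh s a))^2 ≤ ∑ a, π t s a * qh s a := by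
    have h := jensen_sq (fun a => π t s a) (fun a => Real.sqrt (qh s a))
      (fun a => hπ0 t s a) (hπ1 t s)
    calc (∑ a, π t s a * Real.sqrt (qh s a))^2
        ≤ ∑ a, π t s a * Real.sqrt (qh s a)^2 := h
      _ = ∑ a, π t s a * qh s a := by
          refine Finset.sum_congr rfl fun a _ => ?_
          rw [Real.sq_sqrt (hqh0 a)]
  have hεt0 : 0 ≤ εt s := by
    rw [hεt s, hct s]
    have := hZc
    have hm0' : (0:ℝ) ≤ m := hm0
    rw [hmdef] at hm0'
    linarith [hm0']
  -- P1
  have hP1 : Ex π p (n+1) t s (retG r (n+1) s) = vt s := by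
    rw [Ex_succ]
    have hin : ∀ a s', Ex π p n (t+1) s' (fun τ => retG r (n+1) s (a, s', τ))
        = r s a + v1 s' := by
      intro a s'
      have hfun : (fun τ : Traj S A n => retG r (n+1) s (a, s', τ))
          = fun τ => 1 * (r s a + retG r n s' τ) := by
        funext τ
        show r s a + retG r n s' τ = 1 * (r s a + retG r n s' τ)
        ring
      rw [hfun, Ex_comp π p n (t+1) s' (hsumπ n (t+1) s'), ih1 s', one_mul]
    rw [hv s]
    refine Finset.sum_congr rfl fun a _ => ?_
    calc ∑ s', π t s a * p s a s' * Ex π p n (t+1) s' (fun τ => retG r (n+1) s (a, s', τ))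
        = π t s a * ∑ s', p s a s' * (r s a + v1 s') := by
          rw [Finset.mul_sum]
          refine Finset.sum_congr rfl fun s' _ => ?_
          rw [hin a s']; ring
      _ = π t s a * q s a := by rw [sum_p_affine _ (hp1 s a), ← hq s a]
  -- P2
  have hP2 : Ex π p (n+1) t s (fun τ => retG r (n+1) s τ ^ 2) = ∑ a, π t s a * qh s a := by
    rw [Ex_succ]
    have hin : ∀ a s', Ex π p n (t+1) s' (fun τ => retG r (n+1) s (a, s', τ) ^ 2)
        = r s a ^2 + 2 * r s a * v1 s' + W1 s' := by
      intro a s'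
      have hfun : (fun τ : Traj S A n => retG r (n+1) s (a, s', τ) ^ 2)
          = fun τ => (1 * (r s a + retG r n s' τ))^2 := by
        funext τ
        show (r s a + retG r n s' τ)^2 = (1 * (r s a + retG r n s' τ))^2
        ring
      rw [hfun, Ex_comp_sq π p n (t+1) s' (hsumπ n (t+1) s'), ih1 s', ih2 s']
      ring
    refine Finset.sum_congr rfl fun a _ => ?_
    calc ∑ s', π t s a * p s a s' * Ex π p n (t+1) s' (fun τ => retG r (n+1) s (a, s', τ)^2)
        = π t s a * ∑ s', p s a s' * (r s a ^2 + 2 * r s a * v1 s' + W1 s') := by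
          rw [Finset.mul_sum]
          refine Finset.sum_congr rfl fun s' _ => ?_
          rw [hin a s']; ring
      _ = π t s a * qh s a := by
          rw [sum_p_quad _ (hp1 s a)]
          have : r s a ^2 + 2*r s a*(∑ s', p s a s' * v1 s') + ∑ s', p s a s' * W1 s'
              = qh s a := by
            rw [hqh s a, hq s a]; ring
          rw [this]
  -- P3
  have hP3 : Ex μ p (n+1) t s (pdis π μ r (n+1) t s) = vt s := by
    rw [Ex_succ]
    have hin : ∀ a s', Ex μ p n (t+1) s' (fun τ => pdis π μ r (n+1) t s (a, s', τ))
        = π t s a / μ t s a * (r s a + v1 s') := by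
      intro a s'
      have hfun : (fun τ : Traj S A n => pdis π μ r (n+1) t s (a, s', τ))
          = fun τ => (π t s a / μ t s a) * (r s a + pdis π μ r n (t+1) s' τ) := rfl
      rw [hfun, Ex_comp μ p n (t+1) s' (hsumμ n (t+1) s'), ih3 s']
    rw [hv s]
    refine Finset.sum_congr rfl fun a _ => ?_
    calc ∑ s', μ t s a * p s a s' * Ex μ p n (t+1) s' (fun τ => pdis π μ r (n+1) t s (a,s',τ))
        = μ t s a * (π t s a / μ t s a) * ∑ s', p s a s' * (r s a + v1 s') := by
          rw [Finset.mul_sum]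
          refine Finset.sum_congr rfl fun s' _ => ?_
          rw [hin a s']; ring
      _ = μ t s a * (π t s a / μ t s a * q s a) := by
          rw [sum_p_affine _ (hp1 s a), ← hq s a]; ring
      _ = π t s a * q s a :=
          key_pi_mu (π t s) (qh s) (q s) (μ t s) (hπ0 t s) hq2 (hμdef s) a
  -- P4
  have hP4 : Ex μ p (n+1) t s (fun τ => pdis π μ r (n+1) t s τ ^ 2)
      ≤ (∑ a, π t s a * qh s a) - εt s := by
    rw [Ex_succ]
    have hin : ∀ a s', Ex μ p n (t+1) s' (fun τ => pdis π μ r (n+1) t s (a, s', τ) ^ 2)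
        = (π t s a / μ t s a)^2 * (r s a ^2 + 2*r s a*v1 s'
            + Ex μ p n (t+1) s' (fun τ => pdis π μ r n (t+1) s' τ ^2)) := by
      intro a s'
      have hfun : (fun τ : Traj S A n => pdis π μ r (n+1) t s (a, s', τ) ^ 2)
          = fun τ => ((π t s a / μ t s a) * (r s a + pdis π μ r n (t+1) s' τ))^2 := rfl
      rw [hfun, Ex_comp_sq μ p n (t+1) s' (hsumμ n (t+1) s'), ih3 s']
    have hstep1 : ∑ a, ∑ s', μ t s a * p s a s'
          * Ex μ p n (t+1) s' (fun τ => pdis π μ r (n+1) t s (a, s', τ)^2)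
        ≤ ∑ a, μ t s a * (π t s a / μ t s a)^2 * (qh s a - e a) := by
      refine Finset.sum_le_sum fun a _ => ?_
      have hrow : ∀ s', μ t s a * p s a s'
            * Ex μ p n (t+1) s' (fun τ => pdis π μ r (n+1) t s (a, s', τ)^2)
          ≤ (μ t s a * (π t s a / μ t s a)^2)
              * (p s a s' * (r s a ^2 + 2*r s a*v1 s' + (W1 s' - ε1 s'))) := by
        intro s'
        rw [hin a s']
        have hco : 0 ≤ μ t s a * (π t s a / μ t s a)^2 * p s a s' :=
          mul_nonneg (mul_nonneg (hμ0 t s a) (sq_nonneg _)) (hp0 s a s')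
        calc μ t s a * p s a s' * ((π t s a / μ t s a)^2 * (r s a ^2 + 2*r s a*v1 s'
              + Ex μ p n (t+1) s' (fun τ => pdis π μ r n (t+1) s' τ ^2)))
            = (μ t s a * (π t s a / μ t s a)^2 * p s a s') * (r s a ^2 + 2*r s a*v1 s'
              + Ex μ p n (t+1) s' (fun τ => pdis π μ r n (t+1) s' τ ^2)) := by ring
          _ ≤ (μ t s a * (π t s a / μ t s a)^2 * p s a s') * (r s a ^2 + 2*r s a*v1 s'
              + (W1 s' - ε1 s')) := by
              refine mul_le_mul_of_nonneg_left ?_ hco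
              linarith [ih4 s']
          _ = (μ t s a * (π t s a / μ t s a)^2)
              * (p s a s' * (r s a ^2 + 2*r s a*v1 s' + (W1 s' - ε1 s'))) := by ring
      calc ∑ s', μ t s a * p s a s'
            * Ex μ p n (t+1) s' (fun τ => pdis π μ r (n+1) t s (a, s', τ)^2)
          ≤ ∑ s', (μ t s a * (π t s a / μ t s a)^2)
              * (p s a s' * (r s a ^2 + 2*r s a*v1 s' + (W1 s' - ε1 s'))) :=
            Finset.sum_le_sum fun s' _ => hrow s'
        _ = μ t s a * (π t s a / μ t s a)^2 * (qh s a - e a) := by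
            rw [← Finset.mul_sum]
            congr 1
            have hre : ∀ s', p s a s' * (r s a ^2 + 2*r s a*v1 s' + (W1 s' - ε1 s'))
                = p s a s' * (r s a ^2 + 2*r s a*v1 s' + W1 s') - p s a s' * ε1 s' := by
              intro s'; ring
            rw [Finset.sum_congr rfl fun s' _ => hre s', Finset.sum_sub_distrib,
              sum_p_quad _ (hp1 s a)]
            have : r s a ^2 + 2*r s a*(∑ s', p s a s' * v1 s') + ∑ s', p s a s' * W1 s'
                = qh s a := by rw [hqh s a, hq s a]; ring
            rw [this]
    have hcore := core_bound (π t s) (qh s) e (μ t s) (hπ0 t s) (hπ1 t s) hqh0 he0 heq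
      (hμdef s)
    calc ∑ a, ∑ s', μ t s a * p s a s'
          * Ex μ p n (t+1) s' (fun τ => pdis π μ r (n+1) t s (a, s', τ)^2)
        ≤ ∑ a, μ t s a * (π t s a / μ t s a)^2 * (qh s a - e a) := hstep1
      _ ≤ (∑ a, π t s a * Real.sqrt (qh s a))^2 - Finset.univ.inf' Finset.univ_nonempty e :=
          hcore
      _ = (∑ a, π t s a * qh s a) - εt s := by
          rw [hεt s, hct s, ← hmdef]
          ring
  -- P6
  have hP6 : (vt s)^2 ≤ (∑ a, π t s a * qh s a) - εt s := by
    have hj : (Ex μ p (n+1) t s (pdis π μ r (n+1) t s))^2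
        ≤ Ex μ p (n+1) t s (fun τ => pdis π μ r (n+1) t s τ ^2) := by
      have := jensen_sq (trajP μ p (n+1) t s) (pdis π μ r (n+1) t s)
        (fun τ => trajP_nonneg μ p hμ0 hp0 (n+1) t s τ) (hsumμ (n+1) t s)
      exact this
    rw [← hP3]
    exact le_trans hj hP4
  exact ⟨hP1, hP2, hP3, hP4, hεt0, hP6⟩

open scoped Classical in
/-- Quantified variance reduction: the PDIS estimator under `μ̂` improves on the
on-policy estimator by at least `ε_t(s)`, the optimal cost-to-go of the cost
`c_t(s)`; moreover `ε_t(s) ≥ 0`. -/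
theorem muhat_variance_reduction_quantified {S A : Type} [Fintype S] [Fintype A]
    [Nonempty A]
    (T : ℕ) (hT : 1 ≤ T) (p : S → A → S → ℝ) (r : S → A → ℝ)
    (π μhat : ℕ → S → A → ℝ)
    (v : ℕ → S → ℝ) (q qhat : ℕ → S → A → ℝ) (c ε : ℕ → S → ℝ)
    (hp0 : ∀ s a s', 0 ≤ p s a s') (hp1 : ∀ s a, ∑ s', p s a s' = 1)
    (hπ0 : ∀ t s a, 0 ≤ π t s a) (hπ1 : ∀ t s, ∑ a, π t s a = 1)
    (hvT : ∀ s, v T s = 0)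
    (hq : ∀ t, t < T → ∀ s a, q t s a = r s a + ∑ s', p s a s' * v (t+1) s')
    (hv : ∀ t, t < T → ∀ s, v t s = ∑ a, π t s a * q t s a)
    (hqhatT : ∀ s a, qhat (T - 1) s a = 2 * r s a * q (T - 1) s a - (r s a) ^ 2)
    (hqhat : ∀ t, t + 1 < T → ∀ s a, qhat t s a
      = (2 * r s a * q t s a - (r s a) ^ 2)
        + ∑ s', ∑ a', p s a s' * π (t+1) s' a' * qhat (t+1) s' a')
    (hμhat : ∀ t s a, μhat t s a =
      if ∃ a₀, π t s a₀ * Real.sqrt (qhat t s a₀) ≠ 0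
      then π t s a * Real.sqrt (qhat t s a) / ∑ b, π t s b * Real.sqrt (qhat t s b)
      else 1 / (Fintype.card A : ℝ))
    (hc : ∀ t s, c t s
      = ∑ a, π t s a * qhat t s a - (∑ a, π t s a * Real.sqrt (qhat t s a)) ^ 2)
    (hεT : ∀ s, ε (T - 1) s = c (T - 1) s)
    (hε : ∀ t, t + 1 < T → ∀ s, ε t s
      = c t s + Finset.univ.inf' Finset.univ_nonempty
          (fun a => ∑ s', p s a s' * ε (t+1) s')) :
    ∀ t, t < T → ∀ s,
      VarTraj μhat p (T - t) t s (pdis π μhat r (T - t) t s)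
        ≤ VarTraj π p (T - t) t s (retG r (T - t) s) - ε t s
      ∧ 0 ≤ ε t s := by

  classical
  -- μ̂ is a probability distribution at every time/state
  have hμnn : ∀ t s a, 0 ≤ μhat t s a := by
    intro t s a
    rw [hμhat t s a]
    split_ifs with h
    · exact div_nonneg (mul_nonneg (hπ0 t s a) (Real.sqrt_nonneg _))
        (Finset.sum_nonneg fun b _ => mul_nonneg (hπ0 t s b) (Real.sqrt_nonneg _))
    · positivity
  have hμone : ∀ t s, ∑ a, μhat t s a = 1 := by
    intro t s
    by_cases h : ∃ a₀, π t s a₀ * Real.sqrt (qhat t s a₀) ≠ 0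
    · obtain ⟨a₀, ha₀⟩ := h
      have hterm0 : ∀ b, 0 ≤ π t s b * Real.sqrt (qhat t s b) :=
        fun b => mul_nonneg (hπ0 t s b) (Real.sqrt_nonneg _)
      have hZpos : 0 < ∑ b, π t s b * Real.sqrt (qhat t s b) :=
        lt_of_lt_of_le (lt_of_le_of_ne (hterm0 a₀) (Ne.symm ha₀))
          (Finset.single_le_sum (fun b _ => hterm0 b) (Finset.mem_univ a₀))
      calc ∑ a, μhat t s a
          = ∑ a, π t s a * Real.sqrt (qhat t s a) / ∑ b, π t s b * Real.sqrt (qhat t s b) :=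
            Finset.sum_congr rfl fun a _ => by rw [hμhat t s a, if_pos ⟨a₀, ha₀⟩]
        _ = (∑ a, π t s a * Real.sqrt (qhat t s a))
              / ∑ b, π t s b * Real.sqrt (qhat t s b) := by rw [← Finset.sum_div]
        _ = 1 := div_self hZpos.ne'
    · have hcard : ((Fintype.card A : ℝ)) ≠ 0 := by
        have : (0:ℕ) < Fintype.card A := Fintype.card_pos
        exact_mod_cast this.ne'
      calc ∑ a, μhat t s a = ∑ _a : A, 1 / (Fintype.card A : ℝ) :=
            Finset.sum_congr rfl fun a _ => by rw [hμhat t s a, if_neg h]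
        _ = 1 := by
            rw [Finset.sum_const, Finset.card_univ, nsmul_eq_mul]
            field_simp
  have main : ∀ n t, t + (n+1) = T → ∀ s,
      Ex π p (n+1) t s (retG r (n+1) s) = v t s ∧
      Ex π p (n+1) t s (fun τ => retG r (n+1) s τ ^ 2) = ∑ a, π t s a * qhat t s a ∧
      Ex μhat p (n+1) t s (pdis π μhat r (n+1) t s) = v t s ∧
      Ex μhat p (n+1) t s (fun τ => pdis π μhat r (n+1) t s τ ^ 2)
        ≤ (∑ a, π t s a * qhat t s a) - ε t s ∧
      0 ≤ ε t s ∧ (v t s) ^ 2 ≤ (∑ a, π t s a * qhat t s a) - ε t s := by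
    intro n
    induction n with
    | zero =>
      intro t ht
      have e1 : T - 1 = t := by omega
      rw [e1] at hqhatT hεT
      refine step_all p r π μhat hp0 hp1 hπ0 hπ1 hμnn hμone 0 t (q t) (qhat t) (v t) (c t)
        (ε t) (fun _ => 0) (fun _ => 0) (fun _ => 0) ?_ (hv t (by omega)) ?_ (hμhat t) (hc t)
        ?_ ?_ ?_ ?_ ?_ (fun _ => le_refl 0) ?_
      · intro s a
        rw [hq t (by omega) s a]
        congr 1
        refine Finset.sum_congr rfl fun s' _ => ?_
        rw [show t + 1 = T from by omega, hvT s']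
      · intro s a
        rw [hqhatT s a]
        simp
      · intro s
        rw [hεT s]
        simp
      · intro s'
        rw [Ex_zeroLen]
        rfl
      · intro s'
        rw [Ex_zeroLen]
        show ((0:ℝ))^2 = 0
        norm_num
      · intro s'
        rw [Ex_zeroLen]
        rfl
      · intro s'
        rw [Ex_zeroLen]
        show ((0:ℝ))^2 ≤ 0 - 0
        norm_num
      · intro s'
        show ((0:ℝ))^2 ≤ 0 - 0
        norm_num
    | succ n ihn =>
      intro t ht
      have prev := ihn (t+1) (by omega)
      refine step_all p r π μhat hp0 hp1 hπ0 hπ1 hμnn hμone (n+1) t (q t) (qhat t) (v t)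
        (c t) (ε t) (v (t+1)) (fun s' => ∑ a', π (t+1) s' a' * qhat (t+1) s' a') (ε (t+1))
        (hq t (by omega)) (hv t (by omega)) ?_ (hμhat t) (hc t) (hε t (by omega))
        (fun s' => (prev s').1) (fun s' => (prev s').2.1) (fun s' => (prev s').2.2.1)
        (fun s' => (prev s').2.2.2.1) (fun s' => (prev s').2.2.2.2.1)
        (fun s' => (prev s').2.2.2.2.2)
      intro s a
      rw [hqhat t (by omega) s a]
      congr 1
      refine Finset.sum_congr rfl fun s' _ => ?_
      rw [Finset.mul_sum]
      exact Finset.sum_congr rfl fun a' _ => mul_assoc _ _ _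
  intro t htT s
  have hn : T - t = (T - t - 1) + 1 := by omega
  obtain ⟨p1, p2, p3, p4, p5, p6⟩ := main (T - t - 1) t (by omega) s
  rw [hn]
  refine ⟨?_, p5⟩
  show Ex μhat p (T-t-1+1) t s (fun τ => (pdis π μhat r (T-t-1+1) t s τ)^2)
      - (Ex μhat p (T-t-1+1) t s (pdis π μhat r (T-t-1+1) t s))^2
    ≤ (Ex π p (T-t-1+1) t s (fun τ => (retG r (T-t-1+1) s τ)^2)
      - (Ex π p (T-t-1+1) t s (retG r (T-t-1+1) s))^2) - ε t s
  rw [p1, p2, p3]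
  linarith [p4]
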